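/- arXiv:1412.7830 — 4 statements merged into one kernel-verified Lean document; each statement's English description precedes it below -/
import Mathlib

section
/- Let λ₁ ≤ λ₂ ≤ ... ≤ λₙ be complex numbers listed so that whenever λᵢ − λₖ ∈ ℤ and i < k then λᵢ precedes λₖ in nondecreasing order within its resonance group, let p₀(ε) = ∏ᵢ(ε − λᵢ), and for a fixed positive integer j define pᵢⱼ(ε) = ∏_{l<i}(ε − λ_l + j) · ∏_{l>i}(ε − λ_l) for i = 1, ..., n. Then the polynomials p_{1j}, ..., p_{nj} are linearly independent over ℂ. -/
open Polynomial Finset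

/-- For roots `λ₁, ..., λₙ` arranged in nondecreasing order within each integer
resonance group and a fixed positive integer `j`, the polynomials
`pᵢⱼ(ε) = ∏_{l<i}(ε - λ_l + j) · ∏_{l>i}(ε - λ_l)` are linearly independent. -/
theorem deleted_shifted_products_linearIndependent (n : ℕ) (lam : Fin n → ℂ)
    (horder : ∀ i k : Fin n, i < k → ∀ m : ℤ, lam k - lam i = (m : ℂ) → 0 ≤ m)
    (j : ℕ) (hj : 0 < j) :
    LinearIndependent ℂ (fun i : Fin n =>
      (∏ l ∈ univ.filter (fun l => l < i), (X - C (lam l) + C (j : ℂ))) *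
      ∏ l ∈ univ.filter (fun l => i < l), (X - C (lam l))) := by
  have hC : ∀ a : ℂ, X - C a + C (j : ℂ) = X - C (a - j) := by
    intro a; rw [C_sub]; ring
  simp only [hC]
  set q : Fin n → ℂ[X] := fun i =>
      (∏ l ∈ univ.filter (fun l => l < i), (X - C (lam l - j))) *
      ∏ l ∈ univ.filter (fun l => i < l), (X - C (lam l)) with hqdef
  have hqne : ∀ i, q i ≠ 0 := by
    intro i
    apply Monic.ne_zero
    exact (monic_prod_of_monic _ _ fun l _ => monic_X_sub_C _).mul
      (monic_prod_of_monic _ _ fun l _ => monic_X_sub_C _)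
  rw [Fintype.linearIndependent_iff]
  intro g hg
  by_contra hcon
  push_neg at hcon
  obtain ⟨i0, hi0⟩ := hcon
  set s : Finset (Fin n) := univ.filter (fun k => g k ≠ 0) with hs
  have hsne : s.Nonempty := ⟨i0, by simp [hs, hi0]⟩
  set i := s.max' hsne with hi
  have hgi : g i ≠ 0 := by
    have h := s.max'_mem hsne
    exact (mem_filter.mp h).2
  have hmax : ∀ k, g k ≠ 0 → k ≤ i := fun k hk => s.le_max' k (by simp [hs, hk])
  set μ := lam i with hμ
  -- no l < i has lam l - j = μ
  have hnotroot : ∀ l : Fin n, l < i → lam l - (j : ℂ) ≠ μ := by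
    intro l hl heq
    have h2 : lam i - lam l = ((-(j : ℤ) : ℤ) : ℂ) := by
      push_cast
      rw [hμ] at heq
      linear_combination -heq
    have := horder l i hl _ h2
    omega
  set A := (univ.filter (fun l => i < l ∧ lam l = μ)).card with hA
  -- root multiplicity of μ in q i is A
  have hmult : rootMultiplicity μ (q i) = A := by
    have h1 : rootMultiplicity μ (∏ l ∈ univ.filter (fun l => l < i), (X - C (lam l - j))) = 0 := by
      apply rootMultiplicity_eq_zero
      simp only [IsRoot, eval_prod, eval_add, eval_sub, eval_X, eval_C, prod_eq_zero_iff]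
      rintro ⟨l, hl, hl2⟩
      rw [mem_filter] at hl
      exact hnotroot l hl.2 (by linear_combination -hl2)
    have h2 : rootMultiplicity μ (∏ l ∈ univ.filter (fun l => i < l), (X - C (lam l))) = A := by
      have : (∏ l ∈ univ.filter (fun l => i < l), (X - C (lam l)))
          = (((univ.filter (fun l => i < l)).val.map lam).map (fun a => X - C a)).prod := by
        rw [Multiset.map_map]
        rfl
      rw [← count_roots, this, roots_multiset_prod_X_sub_C, Multiset.count_map, hA,
        ← Finset.filter_val, ← Finset.card_def]
      congr 1
      ext l
      simp only [mem_filter, mem_univ, true_and]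
      tauto
    rw [hqdef]
    rw [rootMultiplicity_mul (hqne i), h1, h2, zero_add]
  -- divisibility of other terms
  have hdvd : ∀ k : Fin n, k ≠ i → (X - C μ) ^ (A + 1) ∣ g k • q k := by
    intro k hk
    by_cases hgk : g k = 0
    · rw [hgk, zero_smul]; exact dvd_zero _
    have hki : k < i := lt_of_le_of_ne (hmax k hgk) hk
    have key : (X - C μ) ^ (A + 1) ∣ ∏ l ∈ univ.filter (fun l => k < l), (X - C (lam l)) := by
      set T : Finset (Fin n) := univ.filter (fun l => k < l ∧ lam l = μ) with hT
      have hsub : insert i (univ.filter (fun l => i < l ∧ lam l = μ)) ⊆ T := by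
        intro l hl
        rw [mem_insert] at hl
        rw [hT, mem_filter]
        rcases hl with rfl | hl
        · exact ⟨mem_univ _, hki, rfl⟩
        · rw [mem_filter] at hl
          exact ⟨mem_univ _, hki.trans hl.2.1, hl.2.2⟩
      have hcard : A + 1 ≤ T.card := by
        have : (insert i (univ.filter (fun l => i < l ∧ lam l = μ))).card = A + 1 := by
          rw [card_insert_of_notMem, hA]
          simp
        rw [← this]
        exact card_le_card hsub
      have hprodT : ∏ l ∈ T, (X - C (lam l)) = (X - C μ) ^ T.card := by
        rw [← prod_const]
        apply prod_congr rfl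
        intro l hl
        rw [hT, mem_filter] at hl
        rw [hl.2.2]
      calc (X - C μ) ^ (A + 1) ∣ (X - C μ) ^ T.card := pow_dvd_pow _ hcard
        _ = ∏ l ∈ T, (X - C (lam l)) := hprodT.symm
        _ ∣ ∏ l ∈ univ.filter (fun l => k < l), (X - C (lam l)) := by
            apply prod_dvd_prod_of_subset
            intro l hl
            rw [hT, mem_filter] at hl
            simp [hl.2.1]
    rw [smul_eq_C_mul, hqdef]
    exact (key.mul_left _).mul_left _
  -- conclude
  have hsum : g i • q i = -∑ k ∈ univ.erase i, g k • q k := by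
    have h := Finset.add_sum_erase univ (fun k => g k • q k) (mem_univ i)
    rw [hg] at h
    exact eq_neg_of_add_eq_zero_left h
  have hd2 : (X - C μ) ^ (A + 1) ∣ C (g i) * q i := by
    rw [← smul_eq_C_mul, hsum]
    exact dvd_neg.mpr (Finset.dvd_sum fun k hk => hdvd k (Finset.ne_of_mem_erase hk))
  have hd3 : (X - C μ) ^ (A + 1) ∣ q i := by
    have hqq : q i = C (g i)⁻¹ * (C (g i) * q i) := by
      rw [← mul_assoc, ← C_mul, inv_mul_cancel₀ hgi, C_1, one_mul]
    rw [hqq]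
    exact hd2.mul_left _
  have hnd := pow_rootMultiplicity_not_dvd (hqne i) μ
  rw [hmult] at hnd
  exact hnd hd3
end

section
/- With p₀(ε) = ∏ᵢ(ε − λᵢ) of degree n and pᵢⱼ as defined (delete i-th factor, shift the first i−1 factors by j), the polynomials p_{1j}, ..., p_{nj} span the n-dimensional space of polynomials of degree ≤ n−1 over ℂ. -/
open Polynomial Finset

/-!
Write `A k = ∏_{l<k} (X - aₗ)` and `B k = ∏_{l≥k} (X - bₗ)` (`prodBelow`, `prodFrom`), so that the
polynomials of the statement are `A i * B (i+1)` with `aₗ = λₗ - j` and `bₗ = λₗ`. Since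
`A k * B c - A (k+1) * B (c+1) = (a_k - b_c) • A k * B (c+1)` and `a_k ≠ b_c` for `k < c` (this is
where the ordering of the resonance groups and `j > 0` enter), induction on `c - k` puts every
`A k * B c` with `k < c` in the span. Taking `c = n` gives the monic polynomials `A k` of degree
`k < n`, so the span contains all polynomials of degree `< n`; as it is spanned by `n` vectors, it
is exactly that space.
-/

namespace Polynomial

theorem degreeLT_le_of_monic_mem {R : Type*} [Ring R] [Nontrivial R] {S : Submodule R R[X]}
    {m : ℕ} (p : ℕ → R[X]) (hmonic : ∀ k < m, (p k).Monic)
    (hdeg : ∀ k < m, (p k).natDegree = k) (hmem : ∀ k < m, p k ∈ S) : degreeLT R m ≤ S := by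
  classical
  let q : Sequence R := ⟨fun k => if k < m then p k else X ^ k, fun k => by
    split_ifs with hk
    · rw [degree_eq_natDegree (hmonic k hk).ne_zero, hdeg k hk]
    · exact degree_X_pow k⟩
  rw [← q.span_degreeLT fun k hk => by simp [q, hk, (hmonic k hk).leadingCoeff]]
  refine Submodule.span_le.2 ?_
  rintro _ ⟨k, hk, rfl⟩
  simpa [q, Set.mem_Iio.1 hk] using hmem k hk

theorem finrank_degreeLT (K : Type*) [Field K] (n : ℕ) :
    Module.finrank K (degreeLT K n) = n := by
  rw [(degreeLTEquiv K n).finrank_eq, Module.finrank_fin_fun]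

end Polynomial

section DeletedProd

variable {K : Type*} [Field K] {n : ℕ}

noncomputable def prodBelow (a : Fin n → K) (k : ℕ) : K[X] :=
  ∏ l ∈ univ.filter (fun l : Fin n => (l : ℕ) < k), (X - C (a l))

noncomputable def prodFrom (b : Fin n → K) (k : ℕ) : K[X] :=
  ∏ l ∈ univ.filter (fun l : Fin n => k ≤ (l : ℕ)), (X - C (b l))

noncomputable def deletedProd (a b : Fin n → K) (i : Fin n) : K[X] :=
  prodBelow a i * prodFrom b (i + 1)

theorem prodBelow_succ (a : Fin n → K) {k : ℕ} (hk : k < n) :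
    prodBelow a (k + 1) = prodBelow a k * (X - C (a ⟨k, hk⟩)) := by
  have : univ.filter (fun l : Fin n => (l : ℕ) < k + 1) =
      insert ⟨k, hk⟩ (univ.filter fun l : Fin n => (l : ℕ) < k) := by
    ext l; simp [Fin.ext_iff]; omega
  rw [prodBelow, this, prod_insert (by simp), mul_comm, prodBelow]

theorem prodFrom_eq_mul_succ (b : Fin n → K) {k : ℕ} (hk : k < n) :
    prodFrom b k = (X - C (b ⟨k, hk⟩)) * prodFrom b (k + 1) := by
  have : univ.filter (fun l : Fin n => k ≤ (l : ℕ)) =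
      insert ⟨k, hk⟩ (univ.filter fun l : Fin n => k + 1 ≤ (l : ℕ)) := by
    ext l; simp [Fin.ext_iff]; omega
  rw [prodFrom, this, prod_insert (by simp), prodFrom]

theorem prodFrom_eq_one (b : Fin n → K) {k : ℕ} (hk : n ≤ k) : prodFrom b k = 1 :=
  prod_eq_one fun l hl => absurd (mem_filter.1 hl).2 (by omega)

theorem monic_prodBelow (a : Fin n → K) (k : ℕ) : (prodBelow a k).Monic :=
  monic_prod_X_sub_C _ _

theorem natDegree_prodBelow (a : Fin n → K) {k : ℕ} (hk : k ≤ n) :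
    (prodBelow a k).natDegree = k := by
  rw [prodBelow, natDegree_finsetProd_X_sub_C_eq_card, Fin.card_filter_val_lt, min_eq_right hk]

theorem prodBelow_mul_prodFrom_sub (a b : Fin n → K) {k c : ℕ} (hk : k < n) (hc : c < n) :
    prodBelow a k * prodFrom b c - prodBelow a (k + 1) * prodFrom b (c + 1) =
      (a ⟨k, hk⟩ - b ⟨c, hc⟩) • (prodBelow a k * prodFrom b (c + 1)) := by
  rw [prodFrom_eq_mul_succ b hc, prodBelow_succ a hk, smul_eq_C_mul, C_sub]
  ring

variable {a b : Fin n → K}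

theorem prodBelow_mul_prodFrom_mem_span (hab : ∀ l m : Fin n, l < m → a l ≠ b m) (d : ℕ) :
    ∀ k, k + d < n →
      prodBelow a k * prodFrom b (k + d + 1) ∈ Submodule.span K (Set.range (deletedProd a b)) := by
  induction d with
  | zero => exact fun k hk => Submodule.subset_span ⟨⟨k, hk⟩, rfl⟩
  | succ d ih =>
    intro k hk
    have hlow := ih k (by omega)
    have hhigh := ih (k + 1) (by omega)
    rw [show k + 1 + d + 1 = k + d + 1 + 1 by omega] at hhigh
    have hdiff := Submodule.sub_mem _ hlow hhigh
    rw [prodBelow_mul_prodFrom_sub a b (by omega) (by omega)] at hdiff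
    exact (Submodule.smul_mem_iff _ (sub_ne_zero.2 (hab _ _ (Fin.mk_lt_mk.2 (by omega))))).1 hdiff

theorem prodBelow_mem_span_deletedProd (hab : ∀ l m : Fin n, l < m → a l ≠ b m) {k : ℕ}
    (hk : k < n) : prodBelow a k ∈ Submodule.span K (Set.range (deletedProd a b)) := by
  have := prodBelow_mul_prodFrom_mem_span hab (n - k - 1) k (by omega)
  rwa [prodFrom_eq_one b (by omega), mul_one] at this

theorem span_deletedProd (hab : ∀ l m : Fin n, l < m → a l ≠ b m) :
    Submodule.span K (Set.range (deletedProd a b)) = degreeLT K n := by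
  have hle : degreeLT K n ≤ Submodule.span K (Set.range (deletedProd a b)) :=
    degreeLT_le_of_monic_mem (prodBelow a) (fun k _ => monic_prodBelow a k)
      (fun _ hk => natDegree_prodBelow a hk.le) (fun _ hk => prodBelow_mem_span_deletedProd hab hk)
  have := FiniteDimensional.span_of_finite K (Set.finite_range (deletedProd a b))
  refine (Submodule.eq_of_le_of_finrank_le hle ?_).symm
  calc Module.finrank K (Submodule.span K (Set.range (deletedProd a b)))
      ≤ Fintype.card (Fin n) := finrank_range_le_card _
    _ = Module.finrank K (degreeLT K n) := by rw [Fintype.card_fin, finrank_degreeLT]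

end DeletedProd

/-- With `pᵢⱼ` as in the deleted-shifted factorization of `p₀ = ∏ (ε - λᵢ)`, the
polynomials `p_{1j}, ..., p_{nj}` span the space of polynomials of degree `≤ n-1`. -/
theorem deleted_shifted_products_span (n : ℕ) (lam : Fin n → ℂ)
    (horder : ∀ i k : Fin n, i < k → ∀ m : ℤ, lam k - lam i = (m : ℂ) → 0 ≤ m)
    (j : ℕ) (hj : 0 < j) :
    Submodule.span ℂ (Set.range (fun i : Fin n =>
      (∏ l ∈ univ.filter (fun l => l < i), (X - C (lam l) + C (j : ℂ))) *
      ∏ l ∈ univ.filter (fun l => i < l), (X - C (lam l)))) = degreeLT ℂ n := by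
  have hfamily : (fun i : Fin n =>
      (∏ l ∈ univ.filter (fun l => l < i), (X - C (lam l) + C (j : ℂ))) *
      ∏ l ∈ univ.filter (fun l => i < l), (X - C (lam l))) =
      deletedProd (fun l => lam l - j) lam := by
    funext i
    refine congrArg₂ (· * ·) (prod_congr rfl fun l _ => by rw [C_sub]; ring)
      (prod_congr (filter_congr fun l _ => Nat.succ_le_iff.symm) fun _ _ => rfl)
  rw [hfamily]
  refine span_deletedProd fun l m hlm hres => ?_
  have := horder l m hlm (-j) (by push_cast; linear_combination -hres)
  omega
end

section
/- Let p₀, q₀ ∈ ℂ[ε] be coprime polynomials of degrees n and m. Given any sequences of polynomials (p_k)_{k≥1}, (q_k)_{k≥1} with deg p_k ≤ n, deg q_k ≤ m, and (r_k)_{k≥0} with deg r_k ≤ n+m−1, there exist unique sequences of polynomials (u_k), (v_k) with deg u_k ≤ m−1, deg v_k ≤ n−1 satisfying for every k ≥ 0: Σ_{i+l=k} u_i(ε+l)·p_l(ε) + Σ_{i+l=k} v_i(ε+l)·q_l(ε) = r_k(ε). -/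
/-!
Splitting off the `l = 0` term, the `k`-th equation reads
`u_k p₀ + v_k q₀ = r_k - (terms in u_j, v_j with j < k)`, and since `ε ↦ ε + l` preserves
degrees, the right-hand side has degree `< n + m` once the earlier `u_j, v_j` satisfy the degree
bounds. As `p₀, q₀` are coprime and `deg q₀ = m`, the Sylvester map `(u, v) ↦ u p₀ + v q₀` is
a bijection from pairs of degrees `< m`, `< n` onto polynomials of degree `< n + m`: injectivity
because `q₀ ∣ u` forces `u = 0`, surjectivity by reducing a Bézout solution modulo `q₀`.
So the system is solved uniquely by strong recursion on `k`.
-/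

open Polynomial Finset

theorem existsUnique_seq_of_existsUnique_step {α : Type*} [Nonempty α]
    (P : ℕ → (ℕ → α) → α → Prop) (hP : ∀ k f g, (∀ j < k, f j = g j) → P k f = P k g)
    (step : ∀ k f, (∀ j < k, P j f (f j)) → ∃! a, P k f a) :
    ∃! f : ℕ → α, ∀ k, P k f (f k) := by
  let f : ℕ → α := Nat.strongRec fun k g ↦ Classical.epsilon <|
    P k fun j ↦ if h : j < k then g j h else Classical.arbitrary α
  have hf (k : ℕ) : f k = Classical.epsilon (P k f) := by
    rw [show f k = _ from Nat.strongRec_eq _ k, hP k _ f fun j hj ↦ dif_pos hj]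
  have hsol (k : ℕ) : P k f (f k) := by
    induction k using Nat.strong_induction_on with
    | _ k ih => rw [hf k]; exact Classical.epsilon_spec (step k f ih).exists
  refine ⟨f, hsol, fun g hg ↦ funext fun k ↦ ?_⟩
  induction k using Nat.strong_induction_on with
  | _ k ih => exact (step k f fun j _ ↦ hsol j).unique (hP k g f ih ▸ hg k) (hsol k)

namespace Polynomial

section Semiring

variable {R : Type*} [Semiring R]

lemma degree_mul_lt_of_lt_of_le {a b : R[X]} {m n : ℕ} (ha : a.degree < m)
    (hb : b.degree ≤ n) : (a * b).degree < ↑(m + n) := by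
  rcases eq_or_ne b 0 with rfl | hb0
  · simp
  · rw [Nat.cast_add]
    exact (degree_mul_le a b).trans_lt
      (WithBot.add_lt_add_of_lt_of_le (degree_ne_bot.2 hb0) ha hb)

/-- The `k`-th coefficient of `U·L` for `U = Σ tᵏ uₖ(ε)`, `L = Σ tᵏ pₖ(ε)` in the Euler–Weyl
algebra, where `w(ε)·tʲ = tʲ·w(ε+j)`. -/
noncomputable def eulerMulCoeff (u p : ℕ → R[X]) (k : ℕ) : R[X] :=
  ∑ l ∈ range (k + 1), (u (k - l)).comp (X + C (l : R)) * p l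

noncomputable def eulerMulTail (u p : ℕ → R[X]) (k : ℕ) : R[X] :=
  ∑ l ∈ range k, (u (k - (l + 1))).comp (X + C ((l + 1 : ℕ) : R)) * p (l + 1)

lemma eulerMulCoeff_eq_add_tail (u p : ℕ → R[X]) (k : ℕ) :
    eulerMulCoeff u p k = u k * p 0 + eulerMulTail u p k := by
  simp [eulerMulCoeff, eulerMulTail, sum_range_succ', add_comm]

lemma eulerMulTail_congr {u u' : ℕ → R[X]} (p : ℕ → R[X]) {k : ℕ} (h : ∀ j < k, u j = u' j) :
    eulerMulTail u p k = eulerMulTail u' p k :=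
  sum_congr rfl fun l hl ↦ by rw [h _ (by have := mem_range.1 hl; omega)]

lemma degree_eulerMulTail_lt {u p : ℕ → R[X]} {k m n : ℕ} (hu : ∀ j < k, (u j).degree < m)
    (hp : ∀ l, (p l).degree ≤ n) : (eulerMulTail u p k).degree < ↑(m + n) := by
  refine (degree_sum_le _ _).trans_lt <| (Finset.sup_lt_iff (WithBot.bot_lt_coe _)).2 fun l hl ↦ ?_
  refine degree_mul_lt_of_lt_of_le ?_ (hp _)
  rw [← taylor_apply, degree_taylor]
  exact hu _ (by have := mem_range.1 hl; omega)

end Semiring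

lemma eq_zero_of_mul_add_mul_eq_zero {R : Type*} [CommRing R] [IsDomain R] {p₀ q₀ u v : R[X]}
    (hcop : IsCoprime p₀ q₀) (hu : u.degree < q₀.degree) (h : u * p₀ + v * q₀ = 0) :
    u = 0 ∧ v = 0 := by
  have hu0 : u = 0 := by
    refine eq_zero_of_dvd_of_degree_lt (hcop.symm.dvd_of_dvd_mul_right ⟨-v, ?_⟩) hu
    linear_combination h
  have hq₀ : q₀ ≠ 0 := by rintro rfl; simp at hu
  subst hu0
  exact ⟨rfl, by simpa [hq₀] using h⟩

theorem existsUnique_mul_add_mul_eq {K : Type*} [Field K] {p₀ q₀ s : K[X]} {m n : ℕ}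
    (hcop : IsCoprime p₀ q₀) (hp₀ : p₀.degree ≤ n) (hq₀ : q₀.degree = m)
    (hs : s.degree < ↑(n + m)) :
    ∃! uv : K[X] × K[X], uv.1.degree < m ∧ uv.2.degree < n ∧ uv.1 * p₀ + uv.2 * q₀ = s := by
  obtain ⟨a, b, hab⟩ := hcop
  have hq₀0 : q₀ ≠ 0 := by rintro rfl; simp at hq₀
  have huv : (a * s % q₀) * p₀ + (b * s + a * s / q₀ * p₀) * q₀ = s := by
    linear_combination p₀ * EuclideanDomain.div_add_mod (a * s) q₀ + s * hab
  set u := a * s % q₀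
  set v := b * s + a * s / q₀ * p₀
  have hu : u.degree < m := hq₀ ▸ EuclideanDomain.mod_lt _ hq₀0
  have hv : v.degree < n := by
    have hvq : (v * q₀).degree < ↑(n + m) := by
      rw [show v * q₀ = s - u * p₀ by rw [← huv]; ring]
      exact (degree_sub_le _ _).trans_lt
        (max_lt hs (add_comm m n ▸ degree_mul_lt_of_lt_of_le hu hp₀))
    rw [degree_mul, hq₀, Nat.cast_add] at hvq
    exact (WithBot.add_lt_add_iff_right WithBot.coe_ne_bot).mp hvq
  refine ⟨(u, v), ⟨hu, hv, huv⟩, fun ⟨u', v'⟩ ⟨hu', _, huv'⟩ ↦ ?_⟩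
  have hdiff := eq_zero_of_mul_add_mul_eq_zero (u := u' - u) (v := v' - v) ⟨a, b, hab⟩
    (hq₀ ▸ (degree_sub_le _ _).trans_lt (max_lt hu' hu)) (by linear_combination huv' - huv)
  simp only [Prod.mk.injEq, sub_eq_zero] at hdiff ⊢
  exact hdiff

end Polynomial

theorem formal_bezout_solvable_general (n m : ℕ) (p q r : ℕ → Polynomial ℂ)
    (hcop : IsCoprime (p 0) (q 0))
    (hq0 : (q 0).degree = m)
    (hp : ∀ k, (p k).degree ≤ (n : ℕ)) (hq : ∀ k, (q k).degree ≤ (m : ℕ))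
    (hr : ∀ k, (r k).degree < (n + m : ℕ)) :
    ∃! uv : (ℕ → Polynomial ℂ) × (ℕ → Polynomial ℂ),
      (∀ k, (uv.1 k).degree < (m : ℕ) ∧ (uv.2 k).degree < (n : ℕ)) ∧
      (∀ k, (∑ l ∈ range (k + 1), (uv.1 (k - l)).comp (X + C (l : ℂ)) * p l) +
            (∑ l ∈ range (k + 1), (uv.2 (k - l)).comp (X + C (l : ℂ)) * q l) = r k) := by
  let P (k : ℕ) (f : ℕ → ℂ[X] × ℂ[X]) (a : ℂ[X] × ℂ[X]) : Prop :=
    a.1.degree < m ∧ a.2.degree < n ∧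
      a.1 * p 0 + a.2 * q 0 = r k - (eulerMulTail (fun j ↦ (f j).1) p k +
        eulerMulTail (fun j ↦ (f j).2) q k)
  have hP k f g (h : ∀ j < k, f j = g j) : P k f = P k g := by
    simp only [P,
      eulerMulTail_congr (u' := fun j ↦ (g j).1) p fun j hj ↦ congrArg Prod.fst (h j hj),
      eulerMulTail_congr (u' := fun j ↦ (g j).2) q fun j hj ↦ congrArg Prod.snd (h j hj)]
  have step k f (hf : ∀ j < k, P j f (f j)) : ∃! a, P k f a := by
    refine existsUnique_mul_add_mul_eq hcop (hp 0) hq0 <| (degree_sub_le _ _).trans_lt <|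
      max_lt (hr k) <| (degree_add_le _ _).trans_lt <| max_lt ?_ ?_
    · exact add_comm m n ▸ degree_eulerMulTail_lt (fun j hj ↦ (hf j hj).1) hp
    · exact degree_eulerMulTail_lt (fun j hj ↦ (hf j hj).2.1) hq
  refine ((Equiv.arrowProdEquivProdArrow _ _ _).existsUnique_congr fun f ↦ ?_).mp
    (existsUnique_seq_of_existsUnique_step P hP step)
  change _ ↔ _ ∧ ∀ k, eulerMulCoeff _ p k + eulerMulCoeff _ q k = r k
  simp only [P, eulerMulCoeff_eq_add_tail, eq_sub_iff_add_eq, forall_and, and_assoc,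
    Equiv.arrowProdEquivProdArrow_apply]
  exact and_congr_right' <| and_congr_right' <| forall_congr' fun k ↦ by rw [add_add_add_comm]

/-- Coefficientwise solvability of `U·L + V·M = R` for formal Fuchsian operators
with coprime Euler parts: the triangular system
`Σ_{i+l=k} u_i(ε+l)·p_l(ε) + Σ_{i+l=k} v_i(ε+l)·q_l(ε) = r_k(ε)` has a unique
solution with `deg u_k ≤ m-1`, `deg v_k ≤ n-1`. -/
theorem formal_bezout_solvable (n m : ℕ) (p q r : ℕ → Polynomial ℂ)
    (hcop : IsCoprime (p 0) (q 0))
    (hp0 : (p 0).degree = n) (hq0 : (q 0).degree = m)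
    (hp : ∀ k, (p k).degree ≤ (n : ℕ)) (hq : ∀ k, (q k).degree ≤ (m : ℕ))
    (hr : ∀ k, (r k).degree < (n + m : ℕ)) :
    ∃! uv : (ℕ → Polynomial ℂ) × (ℕ → Polynomial ℂ),
      (∀ k, (uv.1 k).degree < (m : ℕ) ∧ (uv.2 k).degree < (n : ℕ)) ∧
      (∀ k, (∑ l ∈ range (k + 1), (uv.1 (k - l)).comp (X + C (l : ℂ)) * p l) +
            (∑ l ∈ range (k + 1), (uv.2 (k - l)).comp (X + C (l : ℂ)) * q l) = r k) :=
  formal_bezout_solvable_general n m p q r hcop hq0 hp hq hr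
end

section
/- Let p₀ ∈ ℂ[ε] have no two roots differing by a positive integer (nonresonant), deg p₀ = n ≥ 1, and let (p_k)_{k≥1} be polynomials of degree ≤ n. Choose h₀ = k₀ ∈ ℂ[ε] of degree n−1 coprime to p₀. Then there exist sequences (h_k)_{k≥1}, (k_k)_{k≥1} of polynomials of degree ≤ n−1 satisfying for all j ≥ 1: p₀(ε+j)·h_j(ε) − p₀(ε)·k_j(ε) = Σ_{i=1}^{j} k_{j−i}(ε+i)·p_i(ε). -/
open Polynomial Finset

noncomputable def eulK (p₀ h₀ : Polynomial ℂ) (p B : ℕ → Polynomial ℂ) : ℕ → Polynomial ℂ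
  | 0 => h₀
  | (j+1) =>
    let q := ∑ i ∈ (Icc 1 (j+1)).attach,
      (eulK p₀ h₀ p B (j+1-(i:ℕ))).comp (X + C ((i:ℕ):ℂ)) * p i
    (p₀.comp (X + C ((j+1 : ℕ):ℂ)) * ((B (j+1) * q) % p₀) - q) / p₀
decreasing_by
  have h1 := (Finset.mem_Icc.mp i.2).1
  omega

/-- Formal Eulerization of a nonresonant Fuchsian operator: with `p₀` nonresonant
of degree `n ≥ 1`, coefficients `p_k` of degree `≤ n` for `k ≥ 1`, and
`h₀ = k₀` of degree `n-1` coprime to `p₀`, there exist sequences `(h_j)`, `(k_j)`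
of polynomials of degree `≤ n-1` solving the recursive conjugacy equations
`p₀(ε+j)·h_j(ε) - p₀(ε)·k_j(ε) = Σ_{i=1}^{j} k_{j-i}(ε+i)·p_i(ε)`. -/
theorem nonresonant_eulerization (p₀ : Polynomial ℂ) (n : ℕ) (hn : 1 ≤ n)
    (hdeg : p₀.degree = n)
    (hnonres : ∀ lam mu : ℂ, p₀.IsRoot lam → p₀.IsRoot mu →
      ∀ m : ℕ, 0 < m → lam - mu ≠ (m : ℂ))
    (p : ℕ → Polynomial ℂ) (hp : ∀ k, 1 ≤ k → (p k).degree ≤ (n : ℕ))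
    (h₀ : Polynomial ℂ) (hh₀ : h₀.degree = ((n - 1 : ℕ) : WithBot ℕ))
    (hcop : IsCoprime p₀ h₀) :
    ∃ h kk : ℕ → Polynomial ℂ, h 0 = h₀ ∧ kk 0 = h₀ ∧
      (∀ j, 1 ≤ j → (h j).degree < (n : ℕ) ∧ (kk j).degree < (n : ℕ)) ∧
      (∀ j : ℕ, 1 ≤ j →
        p₀.comp (X + C (j : ℂ)) * h j - p₀ * kk j =
          ∑ i ∈ Icc 1 j, (kk (j - i)).comp (X + C (i : ℂ)) * p i) := by
  classical
  have hp₀ : p₀ ≠ 0 := by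
    intro h0; rw [h0, degree_zero] at hdeg; exact absurd hdeg.symm (by simp)
  -- comp by X + C c preserves degree
  have hdcomp : ∀ (f : Polynomial ℂ) (c : ℂ), (f.comp (X + C c)).degree = f.degree := by
    intro f c
    rcases eq_or_ne f 0 with rfl | hf
    · simp
    · have h1 : f.comp (X + C c) ≠ 0 := by
        intro h0
        have h2 := congrArg (fun g => g.comp (X - C c)) h0
        simp only [comp_assoc, add_comp, X_comp, C_comp, zero_comp] at h2
        rw [sub_add_cancel, comp_X] at h2
        exact hf h2
      rw [degree_eq_natDegree hf, degree_eq_natDegree h1, natDegree_comp]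
      simp
  -- coprimality of p₀ with its shifts
  have hcop' : ∀ j : ℕ, 1 ≤ j → IsCoprime p₀ (p₀.comp (X + C (j:ℂ))) := by
    intro j hj
    rw [← EuclideanDomain.gcd_isUnit_iff]
    by_contra hu
    set g := EuclideanDomain.gcd p₀ (p₀.comp (X + C (j:ℂ))) with hg
    have hgd : g.degree ≠ 0 := fun h0 => hu (isUnit_iff_degree_eq_zero.mpr h0)
    have hgpos : 0 < g.degree := by
      have hg0 : g ≠ 0 := by
        intro h0
        exact hp₀ (EuclideanDomain.gcd_eq_zero_iff.mp h0).1
      exact lt_of_le_of_ne (Polynomial.zero_le_degree_iff.mpr hg0) (Ne.symm hgd)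
    obtain ⟨z, hz⟩ := Complex.exists_root hgpos
    have hz1 : p₀.IsRoot z := hz.dvd (EuclideanDomain.gcd_dvd_left _ _)
    have hz2 : (p₀.comp (X + C (j:ℂ))).IsRoot z := hz.dvd (EuclideanDomain.gcd_dvd_right _ _)
    have hz3 : p₀.IsRoot (z + j) := by
      simpa [IsRoot, eval_comp] using hz2
    exact hnonres (z + j) z hz3 hz1 j (by omega) (by ring)
  -- Bezout data
  have key : ∀ j : ℕ, ∃ b : Polynomial ℂ, 1 ≤ j →
      ∃ a, a * p₀ + b * p₀.comp (X + C (j:ℂ)) = 1 := by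
    intro j
    by_cases hj : 1 ≤ j
    · obtain ⟨a, b, hab⟩ := hcop' j hj
      exact ⟨b, fun _ => ⟨a, hab⟩⟩
    · exact ⟨0, fun h => absurd h hj⟩
  choose B hB using key
  set kk : ℕ → Polynomial ℂ := eulK p₀ h₀ p B with hkkdef
  set q : ℕ → Polynomial ℂ :=
    fun j => ∑ i ∈ Icc 1 j, (kk (j-i)).comp (X + C ((i:ℕ):ℂ)) * p i with hqdef
  set h : ℕ → Polynomial ℂ := fun j => if j = 0 then h₀ else (B j * q j) % p₀ with hhdef
  have hk0 : kk 0 = h₀ := by rw [hkkdef, eulK]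
  have hh0 : h 0 = h₀ := by simp [hhdef]
  have hhj : ∀ j : ℕ, 1 ≤ j → h j = (B j * q j) % p₀ := by
    intro j hj; rw [hhdef]; simp only [if_neg (by omega : ¬ j = 0)]
  have hkkS : ∀ j : ℕ, 1 ≤ j → kk j = (p₀.comp (X + C (j:ℂ)) * h j - q j) / p₀ := by
    intro j hj
    obtain ⟨m, rfl⟩ : ∃ m, j = m + 1 := ⟨j - 1, by omega⟩
    rw [hhj _ hj, hqdef, hkkdef]
    rw [eulK]
    rw [Finset.sum_attach (Icc 1 (m+1))
      (fun i => (eulK p₀ h₀ p B (m+1-i)).comp (X + C ((i:ℕ):ℂ)) * p i)]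
  have hdvd : ∀ j : ℕ, 1 ≤ j → p₀ ∣ (p₀.comp (X + C (j:ℂ)) * h j - q j) := by
    intro j hj
    obtain ⟨a, hab⟩ := hB j hj
    have hmod : h j = B j * q j - p₀ * ((B j * q j)/p₀) := by
      rw [hhj _ hj]; exact EuclideanDomain.mod_eq_sub_mul_div _ _
    refine ⟨-(a * q j + p₀.comp (X + C (j:ℂ)) * ((B j * q j)/p₀)), ?_⟩
    rw [hmod]
    linear_combination q j * hab
  have heq : ∀ j : ℕ, 1 ≤ j → p₀.comp (X + C (j:ℂ)) * h j - p₀ * kk j = q j := by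
    intro j hj
    rw [hkkS j hj, EuclideanDomain.mul_div_cancel' hp₀ (hdvd j hj)]
    ring
  -- degree of h j
  have hhdeg : ∀ j : ℕ, 1 ≤ j → (h j).degree < (n : WithBot ℕ) := by
    intro j hj
    rw [hhj _ hj, ← hdeg]
    exact EuclideanDomain.mod_lt _ hp₀
  -- lt/le conversion
  have hlt_le : ∀ d : WithBot ℕ, d < ((n:ℕ) : WithBot ℕ) → d ≤ ((n-1:ℕ) : WithBot ℕ) := by
    intro d hd
    cases d with
    | bot => exact bot_le
    | coe m =>
      rw [Nat.cast_withBot, WithBot.coe_lt_coe] at hd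
      rw [Nat.cast_withBot, WithBot.coe_le_coe]
      omega
  -- degree of kk j by strong induction
  have hkdeg : ∀ j : ℕ, (kk j).degree ≤ ((n-1:ℕ) : WithBot ℕ) := by
    intro j
    induction j using Nat.strong_induction_on with
    | _ j ih =>
      rcases Nat.eq_zero_or_pos j with rfl | hj
      · rw [hk0, hh₀]
      · have hqd : (q j).degree ≤ ((2*n-1 : ℕ) : WithBot ℕ) := by
          rw [hqdef]
          refine (degree_sum_le _ _).trans (Finset.sup_le ?_)
          intro i hi
          rw [Finset.mem_Icc] at hi
          refine (degree_mul_le _ _).trans ?_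
          have hA : ((kk (j-i)).comp (X + C ((i:ℕ):ℂ))).degree ≤ ((n-1:ℕ) : WithBot ℕ) := by
            rw [hdcomp]
            exact ih (j - i) (by omega)
          calc ((kk (j-i)).comp (X + C ((i:ℕ):ℂ))).degree + (p i).degree
              ≤ ((n-1:ℕ) : WithBot ℕ) + ((n:ℕ) : WithBot ℕ) := add_le_add hA (hp i hi.1)
            _ ≤ ((2*n-1 : ℕ) : WithBot ℕ) := by
                rw [Nat.cast_withBot, Nat.cast_withBot, Nat.cast_withBot, ← WithBot.coe_add,
                  WithBot.coe_le_coe]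
                omega
        have h1 : (p₀.comp (X + C (j:ℂ)) * h j).degree ≤ ((2*n-1 : ℕ) : WithBot ℕ) := by
          refine (degree_mul_le _ _).trans ?_
          have hA : (p₀.comp (X + C (j:ℂ))).degree = ((n:ℕ) : WithBot ℕ) := by
            rw [hdcomp, hdeg]
          rw [hA]
          calc ((n:ℕ) : WithBot ℕ) + (h j).degree
              ≤ ((n:ℕ) : WithBot ℕ) + ((n-1:ℕ) : WithBot ℕ) :=
                add_le_add le_rfl (hlt_le _ (hhdeg j hj))
            _ ≤ ((2*n-1 : ℕ) : WithBot ℕ) := by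
                rw [Nat.cast_withBot, Nat.cast_withBot, Nat.cast_withBot, ← WithBot.coe_add,
                  WithBot.coe_le_coe]
                omega
        have h2 : (p₀ * kk j).degree ≤ ((2*n-1 : ℕ) : WithBot ℕ) := by
          have hEq : p₀ * kk j = p₀.comp (X + C (j:ℂ)) * h j - q j := by
            linear_combination -(heq j hj)
          rw [hEq]
          exact (degree_sub_le _ _).trans (max_le h1 hqd)
        rcases eq_or_ne (kk j) 0 with h0 | h0
        · rw [h0, degree_zero]; exact bot_le
        · rw [degree_mul, hdeg] at h2
          cases hdk : (kk j).degree with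
          | bot => exact bot_le
          | coe m =>
            rw [hdk, Nat.cast_withBot, Nat.cast_withBot, ← WithBot.coe_add,
              WithBot.coe_le_coe] at h2
            rw [Nat.cast_withBot, WithBot.coe_le_coe]
            omega
  have hle_lt : ∀ d : WithBot ℕ, d ≤ ((n-1:ℕ) : WithBot ℕ) → d < ((n:ℕ) : WithBot ℕ) := by
    intro d hd
    refine lt_of_le_of_lt hd ?_
    rw [Nat.cast_withBot, Nat.cast_withBot, WithBot.coe_lt_coe]
    omega
  refine ⟨h, kk, hh0, hk0, fun j hj => ⟨hhdeg j hj, hle_lt _ (hkdeg j)⟩, fun j hj => ?_⟩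
  rw [heq j hj, hqdef]
end
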